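/- arXiv:2212.10862 — 2 statements merged into one kernel-verified Lean document; each statement's English description precedes it below -/
import Mathlib

section
/- Let (G,X) be a strongly marked group with Property D. Let x, y ∈ X with x ≠ y, let a be a nonzero exponent with x^a ≠ 1 and b a nonzero exponent with y^b ≠ 1. If x^a y^b = y^b x^a, then x y = y x. -/
namespace Paper

/-- The alternating list `(a, b, a, b, ...)` of length `m`. -/
def altList {α : Type*} (a b : α) : ℕ → List α
  | 0 => []
  | n + 1 => a :: altList b a n

/-- The alternating product `a b a ⋯` of length `m` in a monoid. -/
def altProd {G : Type*} [Monoid G] (a b : G) (m : ℕ) : G := (altList a b m).prod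

variable {G : Type*} [Group G]

/-- The set of syllables of a generating set `X`: nontrivial powers of elements of `X`. -/
def Syll (X : Set G) : Set G := {s | ∃ x ∈ X, ∃ a : ℤ, s = x ^ a ∧ s ≠ 1}

/-- A syllabic word: a list all of whose entries are syllables. -/
def SylWord (X : Set G) (w : List G) : Prop := ∀ s ∈ w, s ∈ Syll X

/-- The syllabic length of an element: minimal length of a syllabic word representing it. -/
noncomputable def sylLen (X : Set G) (g : G) : ℕ :=
  sInf {n | ∃ w : List G, SylWord X w ∧ w.prod = g ∧ w.length = n}

/-- A syllabic word is reduced if its length is the syllabic length of the element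
it represents. -/
def Reduced (X : Set G) (w : List G) : Prop :=
  SylWord X w ∧ w.length = sylLen X w.prod

/-- Elementary M-operation of type I. -/
def MOpI (X : Set G) (w w' : List G) : Prop :=
  ∃ (w₁ w₂ : List G) (s t : G), s ∈ Syll X ∧ t ∈ Syll X ∧
    w = w₁ ++ [s, t] ++ w₂ ∧
    ((s * t ∈ Syll X ∧ w' = w₁ ++ [s * t] ++ w₂) ∨ (s * t = 1 ∧ w' = w₁ ++ w₂))

/-- Elementary M-operation of type II. -/
def MOpII (X : Set G) (w w' : List G) : Prop :=
  ∃ (w₁ w₂ : List G) (s t : G) (m : ℕ), s ∈ Syll X ∧ t ∈ Syll X ∧ 2 ≤ m ∧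
    altProd s t m = altProd t s m ∧ sylLen X (altProd s t m) = m ∧
    w = w₁ ++ altList s t m ++ w₂ ∧ w' = w₁ ++ altList t s m ++ w₂

/-- Elementary M-operation (of type I or type II). -/
def MOp (X : Set G) (w w' : List G) : Prop := MOpI X w w' ∨ MOpII X w w'

/-- A syllabic word is M-reduced if its length cannot be shortened by any finite
sequence of elementary M-operations. -/
def MReduced (X : Set G) (w : List G) : Prop :=
  ∀ w', Relation.ReflTransGen (MOp X) w w' → ¬ w'.length < w.length

/-- Property D: a syllabic word is reduced iff it is M-reduced, and any two reduced
syllabic words representing the same element are connected by a finite sequence of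
elementary M-operations of type II. -/
def PropertyD (X : Set G) : Prop :=
  (∀ w : List G, SylWord X w → (Reduced X w ↔ MReduced X w)) ∧
  (∀ w w' : List G, Reduced X w → Reduced X w' → w.prod = w'.prod →
    Relation.ReflTransGen (MOpII X) w w')

/-- `(G, X)` is a marked group: `X` generates `G`. -/
def Marked (X : Set G) : Prop := Subgroup.closure X = ⊤

/-- `(G, X)` is a strongly marked group. -/
def StronglyMarked (X : Set G) : Prop :=
  Marked X ∧ (1 : G) ∉ X ∧
    ∀ x ∈ X, ∀ y ∈ X, ∀ a b : ℤ, x ^ a ≠ 1 → y ^ b ≠ 1 →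
      (x ^ a * y ^ b ∈ Syll X ∨ x ^ a * y ^ b = 1) → x = y

/-- The data of a Dyer graph: a simplicial graph with edge labels `m ≥ 2` and vertex
labels `f ∈ ℕ_{≥2} ∪ {∞}` such that any edge with `m(e) ≠ 2` has both endpoints
labelled `2`. -/
structure DyerData (V : Type*) where
  adj : V → V → Prop
  symm : ∀ u v, adj u v → adj v u
  loopless : ∀ v, ¬ adj v v
  m : V → V → ℕ
  m_symm : ∀ u v, m u v = m v u
  m_two_le : ∀ u v, adj u v → 2 ≤ m u v
  f : V → ℕ∞
  f_two_le : ∀ v, 2 ≤ f v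
  dyer : ∀ u v, adj u v → m u v ≠ 2 → f u = 2 ∧ f v = 2

/-- The defining relators of the Dyer group of `Δ`. -/
def DyerData.rels {V : Type*} (Δ : DyerData V) : Set (FreeGroup V) :=
  {r | ∃ v, Δ.f v ≠ ⊤ ∧ r = (FreeGroup.of v) ^ (Δ.f v).toNat} ∪
  {r | ∃ u v, Δ.adj u v ∧
    r = altProd (FreeGroup.of u) (FreeGroup.of v) (Δ.m u v) *
        (altProd (FreeGroup.of v) (FreeGroup.of u) (Δ.m u v))⁻¹}

/-- The Dyer group of the data `Δ`. -/
abbrev DyerGroup {V : Type*} (Δ : DyerData V) := PresentedGroup Δ.rels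

/-- The standard generating set of a Dyer group. -/
def DyerGens {V : Type*} (Δ : DyerData V) : Set (DyerGroup Δ) :=
  Set.range (PresentedGroup.of (rels := Δ.rels))



section AuxProof

lemma altList_length {α : Type*} : ∀ (n : ℕ) (a b : α), (altList a b n).length = n
  | 0, _, _ => rfl
  | n + 1, a, b => by simp [altList, altList_length n b a]

lemma altProd_two (a b : G) : altProd a b 2 = a * b := by
  simp [altProd, show altList a b 2 = [a, b] from rfl]

lemma mopI_cases {X : Set G} {p q r : G} {z : List G} (h : MOpI X [p, q, r] z) :
    (p * q ∈ Syll X ∨ p * q = 1) ∨ (q * r ∈ Syll X ∨ q * r = 1) := by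
  obtain ⟨w₁, w₂, s, t, -, -, heq, hor⟩ := h
  have hst : s * t ∈ Syll X ∨ s * t = 1 := by
    rcases hor with ⟨h1, -⟩ | ⟨h1, -⟩
    · exact Or.inl h1
    · exact Or.inr h1
  rcases w₁ with - | ⟨u, (- | ⟨v, w₁⟩)⟩
  · obtain ⟨rfl, rfl, -⟩ : p = s ∧ q = t ∧ [r] = w₂ := by simpa using heq
    exact Or.inl hst
  · obtain ⟨-, rfl, rfl, -⟩ : p = u ∧ q = s ∧ r = t ∧ w₂ = [] := by simpa using heq
    exact Or.inr hst
  · have := congrArg List.length heq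
    simp at this
    omega

lemma mopII_cases {X : Set G} {p q r : G} {z : List G} (h : MOpII X [p, q, r] z) :
    p * q = q * p ∨ q * r = r * q ∨ p = r := by
  obtain ⟨w₁, w₂, s, t, m, -, -, hm, hcom, -, heq, -⟩ := h
  rcases w₁ with - | ⟨u, (- | ⟨v, w₁⟩)⟩
  · have hlen := congrArg List.length heq
    simp [altList_length] at hlen
    have hm' : m = 2 ∨ m = 3 := by omega
    rcases hm' with rfl | rfl
    · rw [show altList s t 2 = [s, t] from rfl] at heq
      obtain ⟨rfl, rfl, -⟩ : p = s ∧ q = t ∧ [r] = w₂ := by simpa using heq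
      left
      rw [altProd_two, altProd_two] at hcom
      exact hcom
    · rw [show altList s t 3 = [s, t, s] from rfl] at heq
      obtain ⟨rfl, -, hr, -⟩ : p = s ∧ q = t ∧ r = s ∧ w₂ = [] := by simpa using heq
      exact Or.inr (Or.inr hr.symm)
  · have hlen := congrArg List.length heq
    simp [altList_length] at hlen
    have hm' : m = 2 := by omega
    subst hm'
    rw [show altList s t 2 = [s, t] from rfl] at heq
    obtain ⟨-, rfl, rfl, -⟩ : p = u ∧ q = s ∧ r = t ∧ w₂ = [] := by simpa using heq
    right; left
    rw [altProd_two, altProd_two] at hcom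
    exact hcom
  · have hlen := congrArg List.length heq
    simp [altList_length] at hlen
    omega

lemma key_step {X : Set G} (hSM : StronglyMarked X) (hPD : PropertyD X)
    {x y : G} (hx : x ∈ X) (hy : y ∈ X) (hxy : x ≠ y)
    {a b : ℤ} (ha : x ^ a ≠ 1) (hb : y ^ b ≠ 1)
    (hcomm : x ^ a * y ^ b = y ^ b * x ^ a) (ha1 : x ^ (a + 1) ≠ 1) :
    x * y ^ b = y ^ b * x ∨ y ^ b * x ^ (a + 1) = x ^ (a + 1) * y ^ b := by
  have hxne : x ≠ 1 := fun h => hSM.2.1 (h ▸ hx)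
  have hx1 : x ^ (1 : ℤ) ≠ 1 := by rwa [zpow_one]
  have hsylx : x ∈ Syll X := ⟨x, hx, 1, (zpow_one x).symm, hxne⟩
  have hsyly : y ^ b ∈ Syll X := ⟨y, hy, b, rfl, hb⟩
  have hsylx1 : x ^ (a + 1) ∈ Syll X := ⟨x, hx, a + 1, rfl, ha1⟩
  have hxr : x ≠ x ^ (a + 1) := by
    intro h
    apply ha
    have h2 : x ^ a * x = 1 * x := by rw [← zpow_add_one, ← h, one_mul]
    exact mul_right_cancel h2
  set w1 : List G := [x, y ^ b, x ^ (a + 1)] with hw1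
  set w2 : List G := [x ^ (a + 1), y ^ b, x] with hw2
  have hxx : x * x ^ a = x ^ a * x := ((Commute.refl x).zpow_right a).eq
  have key : w1.prod = w2.prod := by
    simp only [hw1, hw2, List.prod_cons, List.prod_nil, mul_one]
    calc x * (y ^ b * x ^ (a + 1))
        = x * ((y ^ b * x ^ a) * x) := by rw [zpow_add_one, mul_assoc]
      _ = x * ((x ^ a * y ^ b) * x) := by rw [← hcomm]
      _ = (x * x ^ a) * (y ^ b * x) := by simp only [mul_assoc]
      _ = x ^ (a + 1) * (y ^ b * x) := by rw [hxx, ← zpow_add_one]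
  have hSyl1 : SylWord X w1 := by
    intro s hs
    simp only [hw1, List.mem_cons, List.not_mem_nil, or_false] at hs
    rcases hs with rfl | rfl | rfl
    · exact hsylx
    · exact hsyly
    · exact hsylx1
  have hSyl2 : SylWord X w2 := by
    intro s hs
    simp only [hw2, List.mem_cons, List.not_mem_nil, or_false] at hs
    rcases hs with rfl | rfl | rfl
    · exact hsylx1
    · exact hsyly
    · exact hsylx
  have hII : ∀ z, MOpII X w1 z →
      x * y ^ b = y ^ b * x ∨ y ^ b * x ^ (a + 1) = x ^ (a + 1) * y ^ b := by
    intro z hz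
    rcases mopII_cases hz with h | h | h
    · exact Or.inl h
    · exact Or.inr h
    · exact absurd h hxr
  have hI : ∀ z, MOpI X w1 z → False := by
    intro z hz
    rcases mopI_cases hz with h | h
    · refine hxy (hSM.2.2 x hx y hy 1 b hx1 hb ?_)
      rwa [zpow_one]
    · exact hxy ((hSM.2.2 y hy x hx b (a + 1) hb ha1 h).symm)
  by_cases hM : MReduced X w1
  · have hred1 : Reduced X w1 := (hPD.1 w1 hSyl1).mpr hM
    have hred2 : Reduced X w2 := by
      refine ⟨hSyl2, ?_⟩
      rw [← key]
      exact hred1.2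
    have hpath := hPD.2 w1 w2 hred1 hred2 key
    rcases hpath.cases_head with hEq | ⟨z, hstep, -⟩
    · exfalso
      apply hxr
      rw [hw1, hw2] at hEq
      injection hEq with h1 h2
    · exact hII z hstep
  · rw [MReduced] at hM
    push_neg at hM
    obtain ⟨w', hpath, hlt⟩ := hM
    rcases hpath.cases_head with hEq | ⟨z, hstep, -⟩
    · subst hEq
      exact absurd hlt (lt_irrefl _)
    · rcases hstep with hi | hii
      · exact absurd hi (fun h => hI z h)
      · exact hII z hii

lemma commA {X : Set G} (hSM : StronglyMarked X) (hPD : PropertyD X)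
    {x y : G} (hx : x ∈ X) (hy : y ∈ X) (hxy : x ≠ y)
    {a b : ℤ} (ha : x ^ a ≠ 1) (hb : y ^ b ≠ 1)
    (hcomm : x ^ a * y ^ b = y ^ b * x ^ a) :
    x * y ^ b = y ^ b * x := by
  by_cases ha1 : x ^ (a + 1) = 1
  · have hxa : x ^ a = x⁻¹ := by
      have h : x ^ a * x = 1 := by rw [← zpow_add_one]; exact ha1
      exact eq_inv_of_mul_eq_one_left h
    have hc : Commute (x ^ a) (y ^ b) := hcomm
    rw [hxa] at hc
    have h2 := hc.inv_left
    rw [inv_inv] at h2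
    exact h2.eq
  · rcases key_step hSM hPD hx hy hxy ha hb hcomm ha1 with h | h
    · exact h
    · have hc1 : Commute (x ^ (a + 1)) (y ^ b) := h.symm
      have hc : Commute (x ^ a) (y ^ b) := hcomm
      have hcx : Commute ((x ^ a)⁻¹ * x ^ (a + 1)) (y ^ b) := hc.inv_left.mul_left hc1
      have hxe : (x ^ a)⁻¹ * x ^ (a + 1) = x := by
        rw [zpow_add_one, inv_mul_cancel_left]
      rw [hxe] at hcx
      exact hcx.eq

end AuxProof

theorem statement_0 {G : Type*} [Group G] {X : Set G}
    (hSM : StronglyMarked X) (hPD : PropertyD X)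
    {x y : G} (hx : x ∈ X) (hy : y ∈ X) (hxy : x ≠ y)
    {a b : ℤ} (ha : x ^ a ≠ 1) (hb : y ^ b ≠ 1)
    (hcomm : x ^ a * y ^ b = y ^ b * x ^ a) :
    x * y = y * x := by
  have h1 : x * y ^ b = y ^ b * x := commA hSM hPD hx hy hxy ha hb hcomm
  have hxne : x ≠ 1 := fun h => hSM.2.1 (h ▸ hx)
  have hx1 : x ^ (1 : ℤ) ≠ 1 := by rwa [zpow_one]
  have h2 : y * x ^ (1 : ℤ) = x ^ (1 : ℤ) * y :=
    commA hSM hPD hy hx hxy.symm hb hx1 (by rw [zpow_one]; exact h1.symm)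
  rw [zpow_one] at h2
  exact h2.symm

end Paper
end

section
/- Let (G,X) be a strongly marked group with Property D. Let x, y ∈ X with x ≠ y, a a nonzero exponent modulo o(x), b a nonzero exponent modulo o(y), and m ≥ 3. Assume xy ≠ yx, \overline{[x^a,y^b]}_m = \overline{[y^b,x^a]}_m, and lg_{S(X)}(\overline{[x^a,y^b]}_m) = m. Then the orders o(x) and o(y) are both finite and even, a = o(x)/2, and b = o(y)/2. Moreover m is unique: if n ≥ 2 also satisfies \overline{[x^a,y^b]}_n = \overline{[y^b,x^a]}_n and lg_{S(X)}(\overline{[x^a,y^b]}_n) = n, then n = m. -/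
namespace Paper

variable {G : Type*} [Group G]

/-!
Write `s = x ^ a` and `t = y ^ b`. A braid relation `s t s ⋯ = t s t ⋯` of length `k` lets
`s t s ⋯` of any length `N > k` be rewritten with two adjacent `s`, hence with fewer than `N`
syllables. This gives the uniqueness of `m`, and shows that no type II operation acts inside an
alternating word of length `< m`.

Suppose `s² ≠ 1` and let `h = s t s ⋯` of length `m + 1 = (s s) t s ⋯`. If `h` has fewer than
`m` syllables, prepending `s⁻¹` to a reduced word for `h` gives a reduced word for `s t s ⋯`
(length `m`) containing the letter `s⁻¹ ∉ {s, t}`, which type II operations cannot create.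
Otherwise `(s s) t s t ⋯` and `t s t ⋯ (c c)` (with `c` the last letter of `h`) are two
reduced words for `h`; the only type II operations on the first one swap its two leading
letters back and forth, so Property D fails. Hence `s² = 1`, and likewise `t² = 1`.
-/
section AltList
variable {α : Type*}

@[simp]
lemma length_altList (a b : α) : ∀ n, (altList a b n).length = n
  | 0 => rfl
  | n + 1 => by simp [altList, length_altList b a n]

lemma eq_or_eq_of_mem_altList {a b c : α} : ∀ {n}, c ∈ altList a b n → c = a ∨ c = b
  | 0, h => by simp [altList] at h
  | n + 1, h => by
    rcases List.mem_cons.1 h with h | h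
    · exact Or.inl h
    · exact (eq_or_eq_of_mem_altList h).symm

lemma altList_subset_swap {a b : α} {k : ℕ} (hk : 2 ≤ k) : altList b a k ⊆ altList a b k := by
  obtain ⟨k, rfl⟩ := Nat.exists_eq_add_of_le' hk
  intro c hc
  rcases eq_or_eq_of_mem_altList hc with rfl | rfl <;> simp [altList]

lemma altList_prefix_altList (a b : α) {k n : ℕ} (h : k ≤ n) :
    altList a b k <+: altList a b n := by
  induction k generalizing a b n with
  | zero => exact List.nil_prefix
  | succ k ih =>
    obtain ⟨n, rfl⟩ := Nat.exists_eq_add_of_le' (Nat.one_le_of_lt h)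
    exact List.cons_prefix_cons.2 ⟨rfl, ih b a (by omega)⟩

lemma exists_altList_succ_eq_concat (a b : α) (n : ℕ) :
    ∃ c, altList a b (n + 1) = altList a b n ++ [c] := by
  induction n generalizing a b with
  | zero => exact ⟨a, rfl⟩
  | succ n ih =>
    obtain ⟨c, hc⟩ := ih b a
    exact ⟨c, by rw [altList, hc]; rfl⟩

lemma eq_and_eq_or_of_altList_infix {a b p q : α} {k n : ℕ} (hk : 2 ≤ k)
    (h : altList p q k <:+: altList a b n) : p = a ∧ q = b ∨ p = b ∧ q = a := by
  obtain ⟨w₁, w₂, h⟩ := h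
  obtain ⟨k, rfl⟩ := Nat.exists_eq_add_of_le' hk
  induction w₁ generalizing a b n with
  | nil =>
    obtain _ | _ | n := n
    all_goals simp_all [altList]
  | cons c w₁ ih =>
    obtain _ | n := n
    · simp [altList] at h
    · exact (ih (List.cons.inj h).2).symm

end AltList

lemma altProd_succ {M : Type*} [Monoid M] (a b : M) (n : ℕ) :
    altProd a b (n + 1) = a * altProd b a n :=
  List.prod_cons

section Syllables
variable {G : Type*} [Group G] {X : Set G}

lemma zpow_mem_syll {s : G} (hs : s ∈ Syll X) {n : ℤ} (h : s ^ n ≠ 1) : s ^ n ∈ Syll X := by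
  obtain ⟨x, hx, γ, rfl, -⟩ := hs
  exact ⟨x, hx, γ * n, (zpow_mul x γ n).symm, h⟩

lemma inv_mem_syll {s : G} (hs : s ∈ Syll X) : s⁻¹ ∈ Syll X := by
  obtain ⟨x, hx, γ, rfl, h⟩ := hs
  exact ⟨x, hx, -γ, (zpow_neg x γ).symm, inv_ne_one.2 h⟩

lemma mul_self_mem_syll {s : G} (hs : s ∈ Syll X) (h : s * s ≠ 1) : s * s ∈ Syll X := by
  simpa [sq] using zpow_mem_syll hs (n := 2) (by simpa [sq])

lemma sylWord_altList {s t : G} (hs : s ∈ Syll X) (ht : t ∈ Syll X) (n : ℕ) :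
    SylWord X (altList s t n) := fun _ hu => by
  rcases eq_or_eq_of_mem_altList hu with rfl | rfl
  exacts [hs, ht]

lemma sylLen_le_length {w : List G} {g : G} (hw : SylWord X w) (hg : w.prod = g) :
    sylLen X g ≤ w.length :=
  Nat.sInf_le ⟨w, hw, hg, rfl⟩

lemma sylLen_zpow_le {s : G} (hs : s ∈ Syll X) (n : ℤ) : sylLen X (s ^ n) ≤ 1 := by
  by_cases h : s ^ n = 1
  · rw [h]
    exact (sylLen_le_length (X := X) (w := []) (by simp [SylWord]) rfl).trans zero_le_one
  · simpa using
      sylLen_le_length (w := [s ^ n]) (by simpa [SylWord] using zpow_mem_syll hs h) rfl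

lemma exists_sylWord_prod_eq (hM : Marked X) (h1 : (1 : G) ∉ X) (g : G) :
    ∃ w, SylWord X w ∧ w.prod = g := by
  have hg : g ∈ (Subgroup.closure X).toSubmonoid := by rw [hM]; trivial
  rw [Subgroup.closure_toSubmonoid] at hg
  obtain ⟨w, hw, rfl⟩ := Submonoid.exists_list_of_mem_closure hg
  refine ⟨w, fun u hu => ?_, rfl⟩
  have hX : ∀ x ∈ X, x ∈ Syll X := fun x hx =>
    ⟨x, hx, 1, (zpow_one x).symm, fun h => h1 (by simpa [h] using hx)⟩
  rcases hw u hu with hu | hu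
  · exact hX u hu
  · simpa using inv_mem_syll (hX _ hu)

lemma exists_reduced_prod_eq (hM : Marked X) (h1 : (1 : G) ∉ X) (g : G) :
    ∃ w, Reduced X w ∧ w.prod = g := by
  obtain ⟨w, hw, hg, hl⟩ :=
    Nat.sInf_mem (s := {n | ∃ w, SylWord X w ∧ w.prod = g ∧ w.length = n}) <| by
      obtain ⟨w, hw, hg⟩ := exists_sylWord_prod_eq hM h1 g
      exact ⟨_, w, hw, hg, rfl⟩
  exact ⟨w, ⟨hw, by rw [hg]; exact hl⟩, hg⟩

lemma sylLen_mul_self_mul_le {s : G} (hs : s ∈ Syll X) {w : List G} (hw : SylWord X w) :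
    sylLen X (s * s * w.prod) ≤ w.length + 1 := by
  by_cases h : s * s = 1
  · simpa [h] using (sylLen_le_length hw rfl).trans (Nat.le_succ _)
  · exact sylLen_le_length (w := s * s :: w)
      (List.forall_mem_cons.2 ⟨mul_self_mem_syll hs h, hw⟩) rfl

lemma sylLen_altProd_lt_of_braid {s t : G} (hs : s ∈ Syll X) (ht : t ∈ Syll X) {k N : ℕ}
    (hk : 2 ≤ k) (hkN : k < N) (hrel : altProd s t k = altProd t s k) :
    sylLen X (altProd s t N) < N := by
  obtain ⟨k, rfl⟩ := Nat.exists_eq_add_of_le' hk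
  obtain ⟨L, hL⟩ := altList_prefix_altList s t (Nat.succ_le_of_lt hkN)
  have hLsyl : SylWord X L := fun u hu =>
    sylWord_altList hs ht N u (hL ▸ List.mem_append_right _ hu)
  have hLlen : L.length = N - (k + 3) := by
    have := congrArg List.length hL
    simp only [List.length_append, length_altList] at this
    omega
  have hprod : altProd s t N = s * s * (altList t s (k + 1) ++ L).prod := by
    rw [altProd, ← hL, List.prod_append, List.prod_append]
    change altProd s t (k + 3) * L.prod = _
    rw [altProd_succ, ← hrel, altProd_succ]
    simp only [altProd, mul_assoc]
  have := sylLen_mul_self_mul_le (X := X) hs (w := altList t s (k + 1) ++ L)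
    (fun u hu => (List.mem_append.1 hu).elim (sylWord_altList ht hs _ u) (hLsyl u))
  simp only [List.length_append, length_altList, hLlen] at this
  rw [hprod]
  omega

end Syllables

lemma eq_or_eq_of_reflTransGen_of_swap {α : Type*} {R : α → α → Prop} {A A' B : α}
    (hA : ∀ w, R A w → w = A') (hA' : ∀ w, R A' w → w = A)
    (h : Relation.ReflTransGen R A B) :
    B = A ∨ B = A' := by
  induction h with
  | refl => exact Or.inl rfl
  | tail _ hstep ih =>
    rcases ih with rfl | rfl
    exacts [Or.inr (hA _ hstep), Or.inl (hA' _ hstep)]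

section MOperations
variable {G : Type*} [Group G] {X : Set G}

lemma MOpII.subset {w w' : List G} (h : MOpII X w w') : w' ⊆ w := by
  obtain ⟨w₁, w₂, p, q, k, -, -, hk, -, -, rfl, rfl⟩ := h
  intro c hc
  simp only [List.mem_append] at hc ⊢
  have := @altList_subset_swap _ p q k hk c
  tauto

lemma subset_of_reflTransGen_mOpII {w w' : List G}
    (h : Relation.ReflTransGen (MOpII X) w w') : w' ⊆ w := by
  induction h with
  | refl => exact List.Subset.refl _
  | tail _ hstep ih => exact List.Subset.trans hstep.subset ih

lemma not_mOpII_altList {a b : G} {n N : ℕ} (hN : n < N)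
    (hlen : sylLen X (altProd a b N) = N) (w' : List G) : ¬ MOpII X (altList a b n) w' := by
  rintro ⟨w₁, w₂, p, q, k, hp, hq, hk, hrel, -, hw, -⟩
  have hkn : k ≤ n := by
    have := congrArg List.length hw
    simp only [List.length_append, length_altList] at this
    omega
  rcases eq_and_eq_or_of_altList_infix hk ⟨w₁, w₂, hw.symm⟩ with ⟨rfl, rfl⟩ | ⟨rfl, rfl⟩
  · have := sylLen_altProd_lt_of_braid (X := X) hp hq hk (by omega : k < N) hrel
    omega
  · have := sylLen_altProd_lt_of_braid (X := X) hq hp hk (by omega : k < N) hrel.symm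
    omega

/-- An alternating segment of length `≥ 3` at the front would force `r` to begin with `u`. -/
lemma MOpII.cons_cons {u v : G} {r w' : List G} (h : MOpII X (u :: v :: r) w')
    (hr : r.head? ≠ some u) :
    (sylLen X (u * v) = 2 ∧ w' = v :: u :: r) ∨
      ∃ w'', MOpII X (v :: r) w'' ∧ w' = u :: w'' := by
  obtain ⟨w₁, w₂, p, q, k, hp, hq, hk, hrel, hlen, hw, rfl⟩ := h
  rw [List.append_assoc] at hw
  rcases List.cons_eq_append_iff.1 hw with ⟨rfl, hseg⟩ | ⟨w₁, rfl, hseg⟩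
  · obtain ⟨k, rfl⟩ := Nat.exists_eq_add_of_le' hk
    change p :: q :: (altList p q k ++ w₂) = u :: v :: r at hseg
    simp only [List.cons.injEq] at hseg
    obtain ⟨rfl, rfl, hr'⟩ := hseg
    obtain _ | k := k
    · left
      subst hr'
      exact ⟨by simpa [altProd, altList] using hlen, rfl⟩
    · exact absurd (by rw [← hr']; rfl) hr
  · right
    refine ⟨w₁ ++ altList q p k ++ w₂, ⟨w₁, w₂, p, q, k, hp, hq, hk, hrel, hlen, ?_, rfl⟩, rfl⟩
    rw [hseg, List.append_assoc]

end MOperations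

section Square
variable {G : Type*} [Group G] {X : Set G} {s t : G}

lemma le_sylLen_altProd_succ (hM : Marked X) (h1 : (1 : G) ∉ X) (hPD : PropertyD X)
    (hs : s ∈ Syll X) (ht : t ∈ Syll X) (hinv : s⁻¹ ≠ s) (hinvt : s⁻¹ ≠ t) {m : ℕ}
    (halt : altProd s t m = altProd t s m) (hlen : sylLen X (altProd s t m) = m) :
    m ≤ sylLen X (altProd s t (m + 1)) := by
  by_contra! hlt
  obtain ⟨C, ⟨hC, hClen⟩, hCprod⟩ := exists_reduced_prod_eq hM h1 (altProd s t (m + 1))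
  have hprod : (s⁻¹ :: C).prod = altProd s t m := by
    rw [List.prod_cons, hCprod, altProd_succ, ← halt, inv_mul_cancel_left]
  have hW : SylWord X (s⁻¹ :: C) := List.forall_mem_cons.2 ⟨inv_mem_syll hs, hC⟩
  have hred : Reduced X (s⁻¹ :: C) := by
    refine ⟨hW, ?_⟩
    have := sylLen_le_length hW hprod
    rw [hprod, hlen]
    rw [hCprod] at hClen
    simp only [List.length_cons] at this ⊢
    omega
  have hbase : Reduced X (altList s t m) :=
    ⟨sylWord_altList hs ht m, by simpa [altProd] using hlen.symm⟩
  have hmem := subset_of_reflTransGen_mOpII (hPD.2 _ _ hbase hred (by rw [hprod]; rfl))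
    List.mem_cons_self
  rcases eq_or_eq_of_mem_altList hmem with h | h
  exacts [hinv h, hinvt h]

lemma mOpII_mul_self_cons_cons {n : ℕ} (hs : s ≠ 1)
    (hlen : sylLen X (altProd t s (n + 3)) = n + 3) {w' : List G}
    (h : MOpII X (s * s :: t :: altList s t (n + 1)) w') :
    w' = t :: s * s :: altList s t (n + 1) := by
  rcases h.cons_cons (by simpa [altList] using hs) with ⟨-, rfl⟩ | ⟨w'', h', -⟩
  · rfl
  · exact (not_mOpII_altList (a := t) (b := s) (n := n + 2) (by omega) hlen w'' h').elim

lemma mOpII_cons_mul_self_cons (hs : s ∈ Syll X) (hst : s ≠ t) (hts : t ≠ s * s) {n : ℕ}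
    (hlen : sylLen X (altProd s t (n + 3)) = n + 3) {w' : List G}
    (h : MOpII X (t :: s * s :: altList s t (n + 1)) w') :
    w' = s * s :: t :: altList s t (n + 1) := by
  rcases h.cons_cons (by simpa [altList] using hst) with ⟨-, rfl⟩ | ⟨w'', h', -⟩
  · rfl
  exfalso
  rcases h'.cons_cons (by cases n <;> simp [altList, hts]) with ⟨h3, -⟩ | ⟨w''', h'', -⟩
  · have := sylLen_zpow_le hs 3
    rw [show s ^ (3 : ℤ) = s * s * s by rw [zpow_ofNat, pow_three'], h3] at this
    omega
  · exact not_mOpII_altList (a := s) (b := t) (n := n + 1) (by omega) hlen w''' h''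

lemma exists_reduced_altList_concat_mul_self (hs : s ∈ Syll X) (ht : t ∈ Syll X) {n : ℕ}
    (halt : altProd s t (n + 3) = altProd t s (n + 3))
    (hge : n + 3 ≤ sylLen X (altProd s t (n + 4))) :
    ∃ c, Reduced X (altList t s (n + 2) ++ [c * c]) ∧
      (altList t s (n + 2) ++ [c * c]).prod = altProd s t (n + 4) := by
  obtain ⟨c, hc⟩ := exists_altList_succ_eq_concat s t (n + 3)
  have hc' : altList t s (n + 3) = altList t s (n + 2) ++ [c] := (List.cons.inj hc).2
  have hcs : c ∈ Syll X := by
    rcases eq_or_eq_of_mem_altList (hc ▸ List.mem_append_right _ (List.mem_singleton_self c))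
      with rfl | rfl
    exacts [hs, ht]
  have hprod : (altList t s (n + 2) ++ [c * c]).prod = altProd s t (n + 4) := by
    calc _ = (altList t s (n + 2) ++ [c]).prod * c := by simp [mul_assoc]
      _ = altProd s t (n + 4) := by
        rw [← hc', ← altProd, ← halt, altProd, altProd, hc, List.prod_append,
          List.prod_singleton]
  have hc1 : c * c ≠ 1 := fun h => by
    have := sylLen_le_length (sylWord_altList ht hs (n + 2)) (by simpa [h] using hprod)
    simp only [length_altList] at this
    omega
  have hsyl : SylWord X (altList t s (n + 2) ++ [c * c]) := fun u hu => by
    rcases List.mem_append.1 hu with hu | hu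
    · exact sylWord_altList ht hs _ u hu
    · rw [List.mem_singleton.1 hu]
      exact mul_self_mem_syll hcs hc1
  refine ⟨c, ⟨hsyl, ?_⟩, hprod⟩
  have := sylLen_le_length hsyl hprod
  rw [hprod]
  simp only [List.length_append, length_altList, List.length_singleton] at this ⊢
  omega

lemma sylLen_altProd_succ_lt (hPD : PropertyD X) (hs : s ∈ Syll X) (ht : t ∈ Syll X)
    (hst : s ≠ t) (hts : t ≠ s * s) (hss : s * s ≠ 1) {m : ℕ} (hm : 3 ≤ m)
    (halt : altProd s t m = altProd t s m) (hlen : sylLen X (altProd s t m) = m) :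
    sylLen X (altProd s t (m + 1)) < m := by
  obtain ⟨n, rfl⟩ : ∃ n, m = n + 3 := ⟨m - 3, by omega⟩
  show sylLen X (altProd s t (n + 4)) < n + 3
  by_contra! hge
  set A := s * s :: t :: altList s t (n + 1) with hA
  have hAprod : A.prod = altProd s t (n + 4) := by
    rw [altProd_succ, ← halt, altProd_succ, ← mul_assoc]
    rfl
  have hAsyl : SylWord X A :=
    List.forall_mem_cons.2 ⟨mul_self_mem_syll hs hss, sylWord_altList ht hs (n + 2)⟩
  have hAred : Reduced X A := ⟨hAsyl, by
    have := sylLen_le_length hAsyl hAprod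
    rw [hAprod]
    simp only [hA, List.length_cons, length_altList] at this ⊢
    omega⟩
  obtain ⟨c, hBred, hBprod⟩ := exists_reduced_altList_concat_mul_self hs ht halt hge
  have hs1 : s ≠ 1 := fun h => hss (by simp [h])
  rcases eq_or_eq_of_reflTransGen_of_swap
    (fun _ => mOpII_mul_self_cons_cons hs1 (halt ▸ hlen))
    (fun _ => mOpII_cons_mul_self_cons hs hst hts hlen)
    (hPD.2 A _ hAred hBred (hAprod.trans hBprod.symm)) with h | h
  all_goals
    simp only [altList, List.cons_append, List.cons.injEq] at h
  · exact hst h.2.1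
  · exact hs1 (left_eq_mul.1 h.2.1)

lemma mul_self_eq_one_of_braid (hM : Marked X) (h1 : (1 : G) ∉ X) (hPD : PropertyD X)
    (hs : s ∈ Syll X) (ht : t ∈ Syll X) (hst : s ≠ t) (hinvt : s⁻¹ ≠ t) (hts : t ≠ s * s)
    {m : ℕ} (hm : 3 ≤ m) (halt : altProd s t m = altProd t s m)
    (hlen : sylLen X (altProd s t m) = m) :
    s * s = 1 := by
  by_contra hss
  have := le_sylLen_altProd_succ hM h1 hPD hs ht (fun h => hss (inv_eq_iff_mul_eq_one.1 h))
    hinvt halt hlen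
  have := sylLen_altProd_succ_lt hPD hs ht hst hts hss hm halt hlen
  omega

end Square

section Generators
variable {G : Type*} [Group G] {X : Set G} {x y : G} {a b : ℤ}

lemma StronglyMarked.zpow_ne_zpow (hSM : StronglyMarked X) (hx : x ∈ X) (hy : y ∈ X)
    (hxy : x ≠ y) (ha : x ^ a ≠ 1) (hb : y ^ b ≠ 1) : x ^ a ≠ y ^ b := fun h =>
  hxy <| hSM.2.2 x hx y hy a (-b) ha (by simpa using hb) <|
    Or.inr (by rw [h, zpow_neg, mul_inv_cancel])

lemma StronglyMarked.zpow_mul_self_eq_one_of_braid (hSM : StronglyMarked X)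
    (hPD : PropertyD X) (hx : x ∈ X) (hy : y ∈ X) (hxy : x ≠ y) (ha : x ^ a ≠ 1)
    (hb : y ^ b ≠ 1) {m : ℕ} (hm : 3 ≤ m)
    (halt : altProd (x ^ a) (y ^ b) m = altProd (y ^ b) (x ^ a) m)
    (hlen : sylLen X (altProd (x ^ a) (y ^ b) m) = m) :
    x ^ a * x ^ a = 1 := by
  have hne : ∀ {α β : ℤ}, x ^ α ≠ 1 → y ^ β ≠ 1 → x ^ α ≠ y ^ β :=
    hSM.zpow_ne_zpow hx hy hxy
  refine mul_self_eq_one_of_braid hSM.1 hSM.2.1 hPD ⟨x, hx, a, rfl, ha⟩ ⟨y, hy, b, rfl, hb⟩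
    (hne ha hb) ?_ ?_ hm halt hlen
  · rw [← zpow_neg]
    exact hne (by simpa using ha) hb
  · intro h
    by_cases hss : x ^ a * x ^ a = 1
    · exact hb (h.trans hss)
    · rw [← zpow_add] at hss h
      exact hne hss hb h.symm

lemma orderOf_ne_zero_and_even_and_modEq_of_mul_self_eq_one (ha : x ^ a ≠ 1)
    (h : x ^ a * x ^ a = 1) :
    orderOf x ≠ 0 ∧ Even (orderOf x) ∧ a ≡ ((orderOf x / 2 : ℕ) : ℤ) [ZMOD (orderOf x : ℤ)] := by
  obtain ⟨q, hq⟩ : (orderOf x : ℤ) ∣ 2 * a :=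
    orderOf_dvd_iff_zpow_eq_one.2 (by rw [two_mul, zpow_add, h])
  have hna : ¬ (orderOf x : ℤ) ∣ a := fun hd => ha (orderOf_dvd_iff_zpow_eq_one.1 hd)
  obtain ⟨r, rfl⟩ | ⟨r, rfl⟩ := Int.even_or_odd q
  · exact absurd ⟨r, by linarith⟩ hna
  -- `2 a = n (2 r + 1)` makes `n = 2 e` with `e = a - n r ≡ a`.
  set e := a - orderOf x * r with he
  have hn : (orderOf x : ℤ) = 2 * e := by linarith
  have hhalf : ((orderOf x / 2 : ℕ) : ℤ) = e := by
    rw [Int.natCast_div, hn]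
    simp
  refine ⟨fun h0 => hna (by simp_all), Int.even_coe_nat _ |>.1 ⟨e, by rw [hn, two_mul]⟩, ?_⟩
  exact Int.modEq_iff_dvd.2 ⟨-r, by rw [hhalf, he]; ring⟩

end Generators

theorem statement_1_general {G : Type*} [Group G] {X : Set G}
    (hSM : StronglyMarked X) (hPD : PropertyD X)
    {x y : G} (hx : x ∈ X) (hy : y ∈ X) (hxy : x ≠ y)
    {a b : ℤ} (ha : x ^ a ≠ 1) (hb : y ^ b ≠ 1)
    {m : ℕ} (hm : 3 ≤ m)
    (halt : altProd (x ^ a) (y ^ b) m = altProd (y ^ b) (x ^ a) m)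
    (hlen : sylLen X (altProd (x ^ a) (y ^ b) m) = m) :
    (orderOf x ≠ 0 ∧ Even (orderOf x) ∧ orderOf y ≠ 0 ∧ Even (orderOf y) ∧
      a ≡ ((orderOf x / 2 : ℕ) : ℤ) [ZMOD (orderOf x : ℤ)] ∧
      b ≡ ((orderOf y / 2 : ℕ) : ℤ) [ZMOD (orderOf y : ℤ)]) ∧
    (∀ n : ℕ, 2 ≤ n →
      altProd (x ^ a) (y ^ b) n = altProd (y ^ b) (x ^ a) n →
      sylLen X (altProd (x ^ a) (y ^ b) n) = n → n = m) := by
  obtain ⟨hx0, hxe, hxa⟩ := orderOf_ne_zero_and_even_and_modEq_of_mul_self_eq_one ha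
    (hSM.zpow_mul_self_eq_one_of_braid hPD hx hy hxy ha hb hm halt hlen)
  obtain ⟨hy0, hye, hyb⟩ := orderOf_ne_zero_and_even_and_modEq_of_mul_self_eq_one hb
    (hSM.zpow_mul_self_eq_one_of_braid hPD hy hx hxy.symm hb ha hm halt.symm (halt ▸ hlen))
  refine ⟨⟨hx0, hxe, hy0, hye, hxa, hyb⟩, fun n hn haltn hlenn => ?_⟩
  have hs : x ^ a ∈ Syll X := ⟨x, hx, a, rfl, ha⟩
  have ht : y ^ b ∈ Syll X := ⟨y, hy, b, rfl, hb⟩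
  by_contra hne
  rcases Nat.lt_or_gt_of_ne hne with h | h
  · have := sylLen_altProd_lt_of_braid hs ht hn h haltn
    omega
  · have := sylLen_altProd_lt_of_braid hs ht (by omega) h halt
    omega

theorem statement_1 {G : Type*} [Group G] {X : Set G}
    (hSM : StronglyMarked X) (hPD : PropertyD X)
    {x y : G} (hx : x ∈ X) (hy : y ∈ X) (hxy : x ≠ y)
    {a b : ℤ} (ha : x ^ a ≠ 1) (hb : y ^ b ≠ 1)
    {m : ℕ} (hm : 3 ≤ m) (hnc : x * y ≠ y * x)
    (halt : altProd (x ^ a) (y ^ b) m = altProd (y ^ b) (x ^ a) m)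
    (hlen : sylLen X (altProd (x ^ a) (y ^ b) m) = m) :
    (orderOf x ≠ 0 ∧ Even (orderOf x) ∧ orderOf y ≠ 0 ∧ Even (orderOf y) ∧
      a ≡ ((orderOf x / 2 : ℕ) : ℤ) [ZMOD (orderOf x : ℤ)] ∧
      b ≡ ((orderOf y / 2 : ℕ) : ℤ) [ZMOD (orderOf y : ℤ)]) ∧
    (∀ n : ℕ, 2 ≤ n →
      altProd (x ^ a) (y ^ b) n = altProd (y ^ b) (x ^ a) n →
      sylLen X (altProd (x ^ a) (y ^ b) n) = n → n = m) :=
  statement_1_general hSM hPD hx hy hxy ha hb hm halt hlen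

end Paper
end
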